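/- Let b₁, b₂, b₃ ∈ {1, 2} and b be an integer with c := 3b + b₁ + b₂ + b₃ > 0. Let G be the group with presentation ⟨s₁, s₂, s₃, h | [sᵢ,h] for i = 1,2,3, sᵢ³h^{bᵢ} for i = 1,2,3, s₁s₂s₃h^{-b}⟩. Then the abelianization of G is isomorphic to ℤ/3 ⊕ ℤ/(3c). -/

import Mathlib

/-- Relations of the fundamental group of `M_333(b,b₁,b₂,b₃)`:
generators `s₁ = 0`, `s₂ = 1`, `s₃ = 2`, `h = 3`;
relations `[sᵢ,h]` and `sᵢ³h^{bᵢ}` (`i = 1,2,3`), `s₁s₂s₃h^{-b}`. -/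
def rels333 (b b₁ b₂ b₃ : ℤ) : Set (FreeGroup (Fin 4)) :=
  { r | (∃ i : Fin 3, r = .of i.castSucc * .of 3 * (.of i.castSucc)⁻¹ * (.of 3)⁻¹) ∨
        r = (.of 0) ^ (3 : ℤ) * (.of 3) ^ b₁ ∨
        r = (.of 1) ^ (3 : ℤ) * (.of 3) ^ b₂ ∨
        r = (.of 2) ^ (3 : ℤ) * (.of 3) ^ b₃ ∨
        r = .of 0 * .of 1 * .of 2 * (.of 3) ^ (-b) }

/-! Write the abelianization additively, with generators `s₁, s₂, s₃, h`. As `3 ∤ b₁`, choose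
`3u + b₁v = 1`; then `S := u h - v s₁` satisfies `h = 3S` and `s₁ = -b₁S`, so `T := s₂ + b₂S` has
`3T = 0`, the product relation gives `s₃ = -T + (3b + b₁ + b₂)S`, and `3s₃ + b₃h = 0` becomes
`3cS = 0`. Sending `T, S` to `(1, 0), (0, 1)` inverts the map to `ℤ/3 × ℤ/3c` given by
`s₁, s₂, s₃, h ↦ (0, -b₁), (1, -b₂), (-1, 3b + b₁ + b₂), (0, 3)`. -/

namespace PresentedGroup

variable {α A : Type*} [AddCommGroup A] {rels : Set (FreeGroup α)}

def abelianizationLift (f : α → A)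
    (h : ∀ r ∈ rels, FreeGroup.lift (Multiplicative.ofAdd ∘ f) r = 1) :
    Additive (Abelianization (PresentedGroup rels)) →+ A :=
  MonoidHom.toAdditiveLeft (Abelianization.lift (toGroup h))

@[simp]
lemma abelianizationLift_of (f : α → A)
    (h : ∀ r ∈ rels, FreeGroup.lift (Multiplicative.ofAdd ∘ f) r = 1) (x : α) :
    abelianizationLift f h (.ofMul (.of (of x))) = f x := by
  simp [abelianizationLift, toGroup.of]

lemma abelianization_addHom_ext {f g : Additive (Abelianization (PresentedGroup rels)) →+ A}
    (h : ∀ x : α, f (.ofMul (.of (of x))) = g (.ofMul (.of (of x)))) : f = g :=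
  MonoidHom.toAdditiveLeft.symm.injective <| Abelianization.hom_ext _ _ <| ext h

lemma lift_ofMul_of_of_eq_one :
    ∀ r ∈ rels, FreeGroup.lift (Multiplicative.ofAdd ∘
      fun x : α => Additive.ofMul (Abelianization.of (of x : PresentedGroup rels))) r = 1 := by
  intro r hr
  refine (FreeGroup.lift_unique (MulEquiv.toMultiplicative_toAdditive.symm.toMonoidHom.comp
    (Abelianization.of.comp (mk rels))) fun _ => rfl).symm.trans ?_
  change MulEquiv.toMultiplicative_toAdditive.symm (Abelianization.of (mk rels r)) = 1
  rw [one_of_mem hr, map_one, map_one]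

end PresentedGroup

namespace Rels333

section Relations

variable {A : Type*} [AddCommGroup A] {b b₁ b₂ b₃ : ℤ} {x : Fin 4 → A}

variable (b b₁ b₂ b₃) in
structure Satisfies (x : Fin 4 → A) : Prop where
  cube₀ : 3 • x 0 + b₁ • x 3 = 0
  cube₁ : 3 • x 1 + b₂ • x 3 = 0
  cube₂ : 3 • x 2 + b₃ • x 3 = 0
  sum : x 0 + x 1 + x 2 = b • x 3

lemma satisfies_iff :
    Satisfies b b₁ b₂ b₃ x ↔ 3 • x 0 + b₁ • x 3 = 0 ∧ 3 • x 1 + b₂ • x 3 = 0 ∧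
      3 • x 2 + b₃ • x 3 = 0 ∧ x 0 + x 1 + x 2 = b • x 3 :=
  ⟨fun ⟨h₀, h₁, h₂, h⟩ => ⟨h₀, h₁, h₂, h⟩, fun ⟨h₀, h₁, h₂, h⟩ => ⟨h₀, h₁, h₂, h⟩⟩

variable (b b₁ b₂ b₃) in
lemma forall_lift_eq_one_iff (x : Fin 4 → A) :
    (∀ r ∈ rels333 b b₁ b₂ b₃, FreeGroup.lift (Multiplicative.ofAdd ∘ x) r = 1) ↔
      Satisfies b b₁ b₂ b₃ x := by
  simp [rels333, satisfies_iff, or_imp, forall_and, ← ofAdd_add, ← ofAdd_zsmul, ← ofAdd_neg,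
    ← ofAdd_nsmul, add_neg_eq_zero]

def cyclicGen (u v : ℤ) (x : Fin 4 → A) : A := u • x 3 - v • x 0

def torsionGen (b₂ u v : ℤ) (x : Fin 4 → A) : A := x 1 + b₂ • cyclicGen u v x

variable (b b₁ b₂) in
def cyclicCoord : Fin 4 → ℤ := ![-b₁, -b₂, 3 * b + b₁ + b₂, 3]

def torsionCoord : Fin 4 → ℤ := ![0, 1, -1, 0]

variable {u v : ℤ}

lemma apply_three_eq_smul_cyclicGen (huv : 3 * u + b₁ * v = 1) (hx : Satisfies b b₁ b₂ b₃ x) :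
    x 3 = (3 : ℤ) • cyclicGen u v x := by
  unfold cyclicGen
  linear_combination (norm := module) v • hx.cube₀ - huv • x 3

lemma apply_zero_eq_smul_cyclicGen (huv : 3 * u + b₁ * v = 1) (hx : Satisfies b b₁ b₂ b₃ x) :
    x 0 = -b₁ • cyclicGen u v x := by
  unfold cyclicGen
  linear_combination (norm := module) u • hx.cube₀ - huv • x 0

lemma three_nsmul_torsionGen (huv : 3 * u + b₁ * v = 1) (hx : Satisfies b b₁ b₂ b₃ x) :
    3 • torsionGen b₂ u v x = 0 := by
  unfold torsionGen
  linear_combination (norm := module) hx.cube₁ - b₂ • apply_three_eq_smul_cyclicGen huv hx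

lemma three_mul_smul_cyclicGen (huv : 3 * u + b₁ * v = 1) (hx : Satisfies b b₁ b₂ b₃ x) :
    (3 * (3 * b + b₁ + b₂ + b₃)) • cyclicGen u v x = 0 := by
  linear_combination (norm := module) hx.cube₀ + hx.cube₁ + hx.cube₂ - (3 : ℤ) • hx.sum -
    (3 * b + b₁ + b₂ + b₃) • apply_three_eq_smul_cyclicGen huv hx

lemma eq_torsionCoord_smul_add_cyclicCoord_smul (huv : 3 * u + b₁ * v = 1)
    (hx : Satisfies b b₁ b₂ b₃ x) (i : Fin 4) :
    x i = torsionCoord i • torsionGen b₂ u v x + cyclicCoord b b₁ b₂ i • cyclicGen u v x := by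
  have h₀ := apply_zero_eq_smul_cyclicGen huv hx
  have h₃ := apply_three_eq_smul_cyclicGen huv hx
  fin_cases i
  · simpa [torsionCoord, cyclicCoord] using h₀
  · simp [torsionCoord, cyclicCoord, torsionGen]
  · simp only [torsionCoord, cyclicCoord, torsionGen, Fin.reduceFinMk, Matrix.cons_val]
    linear_combination (norm := module) hx.sum - h₀ + b • h₃
  · simpa [torsionCoord, cyclicCoord] using h₃

end Relations

section Equiv

variable (b b₁ b₂ b₃ : ℤ)

def cyclicOrder : ℕ := (3 * (3 * b + b₁ + b₂ + b₃)).natAbs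

def gens : Fin 4 → Additive (Abelianization (PresentedGroup (rels333 b b₁ b₂ b₃))) :=
  fun i => .ofMul (.of (.of i))

lemma satisfies_gens : Satisfies b b₁ b₂ b₃ (gens b b₁ b₂ b₃) :=
  (forall_lift_eq_one_iff b b₁ b₂ b₃ _).1 PresentedGroup.lift_ofMul_of_of_eq_one

def zmodImage : Fin 4 → ZMod 3 × ZMod (cyclicOrder b b₁ b₂ b₃) :=
  fun i => (torsionCoord i, cyclicCoord b b₁ b₂ i)

lemma cast_three_mul_eq_zero :
    (3 * (3 * b + b₁ + b₂ + b₃) : ZMod (cyclicOrder b b₁ b₂ b₃)) = 0 := by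
  exact_mod_cast (ZMod.intCast_zmod_eq_zero_iff_dvd _ _).2 (Int.natAbs_dvd.2 dvd_rfl)

lemma satisfies_zmodImage : Satisfies b b₁ b₂ b₃ (zmodImage b b₁ b₂ b₃) := by
  have h3 : (3 : ZMod 3) = 0 := rfl
  refine ⟨?_, ?_, ?_, ?_⟩ <;> ext <;> simp [zmodImage, torsionCoord, cyclicCoord, h3, mul_comm]
  · linear_combination cast_three_mul_eq_zero b b₁ b₂ b₃
  · ring

def toZModProd :
    Additive (Abelianization (PresentedGroup (rels333 b b₁ b₂ b₃))) →+
      ZMod 3 × ZMod (cyclicOrder b b₁ b₂ b₃) :=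
  PresentedGroup.abelianizationLift (zmodImage b b₁ b₂ b₃)
    ((forall_lift_eq_one_iff b b₁ b₂ b₃ _).2 (satisfies_zmodImage b b₁ b₂ b₃))

lemma toZModProd_gens (i : Fin 4) :
    toZModProd b b₁ b₂ b₃ (gens b b₁ b₂ b₃ i) = zmodImage b b₁ b₂ b₃ i :=
  PresentedGroup.abelianizationLift_of _ _ i

variable {b₁} {u v : ℤ}

def ofZModProd (huv : 3 * u + b₁ * v = 1) :
    ZMod 3 × ZMod (cyclicOrder b b₁ b₂ b₃) →+
      Additive (Abelianization (PresentedGroup (rels333 b b₁ b₂ b₃))) :=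
  (ZMod.lift 3 ⟨zmultiplesHom _ (torsionGen b₂ u v (gens b b₁ b₂ b₃)), by
      rw [zmultiplesHom_apply, natCast_zsmul]
      exact three_nsmul_torsionGen huv (satisfies_gens b b₁ b₂ b₃)⟩).coprod
    (ZMod.lift _ ⟨zmultiplesHom _ (cyclicGen u v (gens b b₁ b₂ b₃)), by
      rw [zmultiplesHom_apply, natCast_zsmul, cyclicOrder, natAbs_nsmul_eq_zero]
      exact three_mul_smul_cyclicGen huv (satisfies_gens b b₁ b₂ b₃)⟩)

lemma ofZModProd_intCast (huv : 3 * u + b₁ * v = 1) (k l : ℤ) :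
    ofZModProd b b₂ b₃ huv ((k : ZMod 3), (l : ZMod (cyclicOrder b b₁ b₂ b₃))) =
      k • torsionGen b₂ u v (gens b b₁ b₂ b₃) + l • cyclicGen u v (gens b b₁ b₂ b₃) := by
  simp [ofZModProd, ZMod.lift_coe]

lemma toZModProd_cyclicGen (huv : 3 * u + b₁ * v = 1) :
    toZModProd b b₁ b₂ b₃ (cyclicGen u v (gens b b₁ b₂ b₃)) = (0, 1) := by
  have huv' : (3 * u + b₁ * v : ZMod (cyclicOrder b b₁ b₂ b₃)) = 1 := by
    exact_mod_cast congrArg (Int.cast : ℤ → ZMod (cyclicOrder b b₁ b₂ b₃)) huv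
  rw [cyclicGen, map_sub, map_zsmul, map_zsmul, toZModProd_gens, toZModProd_gens]
  ext <;> simp [zmodImage, torsionCoord, cyclicCoord]
  linear_combination huv'

lemma toZModProd_torsionGen (huv : 3 * u + b₁ * v = 1) :
    toZModProd b b₁ b₂ b₃ (torsionGen b₂ u v (gens b b₁ b₂ b₃)) = (1, 0) := by
  rw [torsionGen, map_add, map_zsmul, toZModProd_cyclicGen b b₂ b₃ huv, toZModProd_gens]
  simp [zmodImage, torsionCoord, cyclicCoord]

lemma ofZModProd_comp_toZModProd (huv : 3 * u + b₁ * v = 1) :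
    (ofZModProd b b₂ b₃ huv).comp (toZModProd b b₁ b₂ b₃) = AddMonoidHom.id _ :=
  PresentedGroup.abelianization_addHom_ext fun i => by
    change ofZModProd b b₂ b₃ huv (toZModProd b b₁ b₂ b₃ (gens b b₁ b₂ b₃ i)) = gens b b₁ b₂ b₃ i
    rw [toZModProd_gens, zmodImage, ofZModProd_intCast]
    exact (eq_torsionCoord_smul_add_cyclicCoord_smul huv (satisfies_gens b b₁ b₂ b₃) i).symm

lemma toZModProd_comp_ofZModProd (huv : 3 * u + b₁ * v = 1) :
    (toZModProd b b₁ b₂ b₃).comp (ofZModProd b b₂ b₃ huv) = AddMonoidHom.id _ := by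
  refine AddMonoidHom.ext fun ⟨p, q⟩ => ?_
  obtain ⟨k, rfl⟩ := ZMod.intCast_surjective p
  obtain ⟨l, rfl⟩ := ZMod.intCast_surjective q
  simp [ofZModProd_intCast, toZModProd_torsionGen b b₂ b₃ huv, toZModProd_cyclicGen b b₂ b₃ huv]

def abelianizationEquiv (huv : 3 * u + b₁ * v = 1) :
    Additive (Abelianization (PresentedGroup (rels333 b b₁ b₂ b₃))) ≃+
      ZMod 3 × ZMod (cyclicOrder b b₁ b₂ b₃) :=
  AddMonoidHom.toAddEquiv _ _ (ofZModProd_comp_toZModProd b b₂ b₃ huv)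
    (toZModProd_comp_ofZModProd b b₂ b₃ huv)

end Equiv

end Rels333

theorem abelianization_M333_general (b b₁ b₂ b₃ : ℤ)
    (h₁ : b₁ = 1 ∨ b₁ = 2)
    (hc : 0 < 3 * b + b₁ + b₂ + b₃) :
    Nonempty (Abelianization (PresentedGroup (rels333 b b₁ b₂ b₃)) ≃*
      Multiplicative (ZMod 3 × ZMod (3 * (3 * b + b₁ + b₂ + b₃)).toNat)) := by
  obtain ⟨u, v, huv⟩ : ∃ u v : ℤ, 3 * u + b₁ * v = 1 := by
    rcases h₁ with rfl | rfl
    exacts [⟨0, 1, rfl⟩, ⟨1, -1, rfl⟩]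
  have hn : (3 * (3 * b + b₁ + b₂ + b₃)).toNat = Rels333.cyclicOrder b b₁ b₂ b₃ := by
    rw [Rels333.cyclicOrder]
    omega
  rw [hn]
  exact ⟨AddEquiv.toMultiplicativeRight (Rels333.abelianizationEquiv b b₂ b₃ huv)⟩

theorem abelianization_M333 (b b₁ b₂ b₃ : ℤ)
    (h₁ : b₁ = 1 ∨ b₁ = 2) (h₂ : b₂ = 1 ∨ b₂ = 2) (h₃ : b₃ = 1 ∨ b₃ = 2)
    (hc : 0 < 3 * b + b₁ + b₂ + b₃) :
    Nonempty (Abelianization (PresentedGroup (rels333 b b₁ b₂ b₃)) ≃*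
      Multiplicative (ZMod 3 × ZMod (3 * (3 * b + b₁ + b₂ + b₃)).toNat)) :=
  abelianization_M333_general b b₁ b₂ b₃ h₁ hc
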